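/- Let (V, φ) be a nonsingular skew-symmetric bilinear form on a finitely generated free ℤ-module of rank 2k (a symplectic ℤ-module), let u ∈ V be unimodular (φ(u, w) = 1 for some w) with, and let v ∈ V satisfy φ(u, v) = 0. Then for any a ∈ ℤ, the transvection τ_{u,a,v}(x) = x + u·φ(v,x) + v·φ(u,x) + u·a·φ(u,x) is an element of the symplectic group Sp(V, φ), and the subgroup of Sp(V, φ) generated by all such transvections (over all valid u, a, v) acts transitively on the set of unimodular vectors of V. -/

import Mathlib

/-- The symplectic transvection `τ_{u,a,v}` for a bilinear form over `ℤ`. -/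
def sympTransvection {V : Type*} [AddCommGroup V] [Module ℤ V]
    (φ : V →ₗ[ℤ] V →ₗ[ℤ] ℤ) (u : V) (a : ℤ) (v : V) (x : V) : V :=
  x + φ v x • u + φ u x • v + (a * φ u x) • u

/-! Fix `w` with `φ u w = 1`. Transvections `x ↦ x + a φ(y, x) y` based at `w` and at `u` change
the pair `(φ(u, v), φ(w, v))` by `c ↦ c + a s` and `s ↦ s + a c`, so the Euclidean algorithm moves
any `v` with a coprime pair to one with `φ(u, v) = 1`, and a single transvection along `u - v`
sends that vector to `u`. For a unimodular `u'`, one more transvection makes the pair coprime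
(at `w`, reaching `φ(u, ·) = 1`, when `φ(u, u') = 0`);
when `φ(u, u') ≠ 0` a transvection at `u` in a direction orthogonal to `u` adds an arbitrary
multiple of some `f` to `φ(w, u')`, where `(φ(u, u'), φ(w, u'), f)` is unimodular, and `ℤ`
modulo a nonzero integer has stable rank one. -/

theorem Int.induction_on_isCoprime {P : ℤ → ℤ → Prop} (one : ∀ s, P 1 s)
    (add_mul_left : ∀ c s a, P (c + a * s) s → P c s)
    (add_mul_right : ∀ c s a, P c (s + a * c) → P c s) {c s : ℤ} (h : IsCoprime c s) :
    P c s := by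
  have of_isUnit {c : ℤ} (hc : IsUnit c) (s : ℤ) : P c s := by
    rcases Int.isUnit_iff.mp hc with rfl | rfl
    · exact one s
    · refine add_mul_right _ _ (s - 1) (add_mul_left _ _ 2 ?_)
      convert one (s + (s - 1) * -1) using 2; ring
  induction hn : s.natAbs using Nat.strong_induction_on generalizing c s with
  | _ n ih =>
    subst hn
    obtain rfl | hs := eq_or_ne s 0
    · exact of_isUnit (isCoprime_zero_right.mp h) 0
    have hc : c + -(c / s) * s = c % s := by rw [Int.emod_def]; ring
    refine add_mul_left _ _ (-(c / s)) ?_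
    rw [hc]
    have hr : IsCoprime (c % s) s := hc ▸ h.add_mul_right_left _
    obtain hr0 | hr0 := eq_or_ne (c % s) 0
    · rw [hr0] at hr ⊢
      refine add_mul_left _ _ s ?_
      rw [zero_add, Int.isUnit_mul_self (isCoprime_zero_left.mp hr)]
      exact one s
    have hs' : s + -(s / (c % s)) * (c % s) = s % (c % s) := by
      rw [Int.emod_def s (c % s)]; ring
    refine add_mul_right _ _ (-(s / (c % s))) ?_
    rw [hs']
    have hcs_lt := Int.emod_lt c hs
    have hcs_nonneg := Int.emod_nonneg c hs
    have hsr_lt := Int.emod_lt s hr0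
    have hsr_nonneg := Int.emod_nonneg s hr0
    exact ih _ (by omega) (hs' ▸ hr.add_mul_right_right _) rfl

theorem Int.exists_isCoprime_add_mul {c s f : ℤ} (hc : c ≠ 0)
    (h : ∃ α β γ : ℤ, α * c + β * s + γ * f = 1) : ∃ t : ℤ, IsCoprime c (s + t * f) := by
  obtain ⟨α, β, γ, hαβγ⟩ := h
  have hf {q : ℤ} (hq : Prime q) (hqc : q ∣ c) (hqs : q ∣ s) : ¬ q ∣ f := fun hqf =>
    hq.not_dvd_one (hαβγ ▸ dvd_add (dvd_add (hqc.mul_left α) (hqs.mul_left β)) (hqf.mul_left γ))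
  -- `t` is divisible exactly by the primes dividing `c` but not `s`
  set F := c.natAbs.primeFactors.filter fun p : ℕ => ¬ (p : ℤ) ∣ s
  refine ⟨∏ p ∈ F, (p : ℤ), isCoprime_of_prime_dvd (fun h => hc h.1) fun q hq hqc hqst => ?_⟩
  have hqp := Int.prime_iff_natAbs_prime.mp hq
  by_cases hqs : q ∣ s
  · obtain ⟨p, hpF, hqp'⟩ := (hq.dvd_finsetProd_iff _).mp
      ((hq.dvd_mul.mp ((dvd_add_right hqs).mp hqst)).resolve_right (hf hq hqc hqs))
    have hpF := Finset.mem_filter.mp hpF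
    have : q.natAbs = p := (Nat.prime_dvd_prime_iff_eq hqp (Nat.mem_primeFactors.mp hpF.1).1).mp
      (by simpa using Int.natAbs_dvd_natAbs.mpr hqp')
    exact hpF.2 (this ▸ Int.natAbs_dvd.mpr hqs)
  · have hpF : q.natAbs ∈ F := Finset.mem_filter.mpr
      ⟨Nat.mem_primeFactors.mpr ⟨hqp, Int.natAbs_dvd_natAbs.mpr hqc, by simpa using hc⟩,
        fun h => hqs (Int.natAbs_dvd.mp h)⟩
    have hqt : q ∣ ∏ p ∈ F, (p : ℤ) :=
      (Int.natAbs_dvd.mp dvd_rfl).trans (Finset.dvd_prod_of_mem (fun p : ℕ => (p : ℤ)) hpF)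
    exact hqs ((dvd_add_left (hqt.mul_right f)).mp hqst)

section Transvection

open MulAction

variable {V : Type*} [AddCommGroup V] [Module ℤ V] {φ : V →ₗ[ℤ] V →ₗ[ℤ] ℤ} {u v : V} {a : ℤ}

theorem apply_sympTransvection_right (y x : V) :
    φ y (sympTransvection φ u a v x) =
      φ y x + φ v x * φ y u + φ u x * φ y v + a * φ u x * φ y u := by
  simp only [sympTransvection, map_add, LinearMap.map_smul_of_tower, smul_eq_mul]

theorem sympTransvection_zero (x : V) :
    sympTransvection φ u a 0 x = x + (a * φ u x) • u := by
  simp only [sympTransvection, map_zero, LinearMap.zero_apply, zero_smul, zsmul_zero, add_zero]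

theorem apply_sympTransvection_zero_right (y x : V) :
    φ y (sympTransvection φ u a 0 x) = φ y x + a * φ u x * φ y u := by
  rw [sympTransvection_zero, map_add, map_zsmul, smul_eq_mul]

theorem sympTransvection_neg_sympTransvection (hφ : φ.IsAlt) (huv : φ u v = 0) (x : V) :
    sympTransvection φ u (-a) (-v) (sympTransvection φ u a v x) = x := by
  have hvu : φ v u = 0 := hφ.eq_iff.mp huv
  have hu : φ u (sympTransvection φ u a v x) = φ u x := by
    simp [apply_sympTransvection_right, hφ.self_eq_zero, huv]
  have hv : φ v (sympTransvection φ u a v x) = φ v x := by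
    simp [apply_sympTransvection_right, hφ.self_eq_zero, hvu]
  rw [sympTransvection, map_neg, LinearMap.neg_apply, hu, hv, sympTransvection]
  simp only [neg_mul, neg_zsmul, zsmul_neg]
  abel

theorem apply_sympTransvection_sympTransvection (hφ : φ.IsAlt) (huv : φ u v = 0) (x y : V) :
    φ (sympTransvection φ u a v x) (sympTransvection φ u a v y) = φ x y := by
  have hvu : φ v u = 0 := hφ.eq_iff.mp huv
  simp only [sympTransvection, map_add, LinearMap.map_smul_of_tower, LinearMap.add_apply,
    LinearMap.smul_apply, hφ.self_eq_zero, huv, hvu, smul_eq_mul]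
  rw [← hφ.neg x u, ← hφ.neg x v]
  ring

def sympTransvectionEquiv (hφ : φ.IsAlt) (u : V) (a : ℤ) (v : V) (huv : φ u v = 0) :
    V ≃ₗ[ℤ] V :=
  AddEquiv.toIntLinearEquiv
    { toFun := sympTransvection φ u a v
      invFun := sympTransvection φ u (-a) (-v)
      left_inv := sympTransvection_neg_sympTransvection hφ huv
      right_inv x := by
        have := sympTransvection_neg_sympTransvection (a := -a) (v := -v) hφ
          (by rwa [map_neg, neg_eq_zero]) x
        rwa [neg_neg, neg_neg] at this
      map_add' x y := by
        simp only [sympTransvection, map_add, mul_add, add_zsmul]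
        abel }

variable (φ) in
def transvections : Set (V ≃ₗ[ℤ] V) :=
  {g | ∃ (u₀ v₀ : V) (a₀ : ℤ), (∃ w : V, φ u₀ w = 1) ∧ φ u₀ v₀ = 0 ∧
    ∀ x : V, g x = sympTransvection φ u₀ a₀ v₀ x}

variable (φ) in
abbrev transvectionGroup : Subgroup (V ≃ₗ[ℤ] V) :=
  Subgroup.closure (transvections φ)

theorem sympTransvection_mem_orbit (hφ : φ.IsAlt) (hu : ∃ w, φ u w = 1) (huv : φ u v = 0)
    (x : V) : sympTransvection φ u a v x ∈ orbit (transvectionGroup φ) x :=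
  ⟨⟨sympTransvectionEquiv hφ u a v huv, Subgroup.subset_closure ⟨u, v, a, hu, huv, fun _ => rfl⟩⟩,
    rfl⟩

theorem mem_orbit_of_sympTransvection_mem_orbit (hφ : φ.IsAlt) (hu : ∃ w, φ u w = 1)
    (huv : φ u v = 0) {x y : V}
    (h : sympTransvection φ u a v x ∈ orbit (transvectionGroup φ) y) :
    x ∈ orbit (transvectionGroup φ) y := by
  rw [← orbit_eq_iff] at h ⊢
  exact (orbit_eq_iff.mpr (sympTransvection_mem_orbit hφ hu huv x)).symm.trans h

theorem exists_apply_eq_one_of_apply_eq_one (hφ : φ.IsAlt) {w : V} (hw : φ u w = 1) :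
    ∃ x, φ w x = 1 :=
  ⟨-u, by rw [map_neg, ← hφ.neg, hw, neg_neg]⟩

theorem mem_orbit_of_apply_eq_one (hφ : φ.IsAlt) (h : φ u v = 1) :
    v ∈ orbit (transvectionGroup φ) u := by
  have h1 : φ (u - v) v = 1 := by
    rw [map_sub, LinearMap.sub_apply, h, hφ.self_eq_zero, sub_zero]
  refine mem_orbit_of_sympTransvection_mem_orbit (a := 1) hφ ⟨v, h1⟩ (map_zero _) ?_
  rw [sympTransvection_zero, h1, mul_one, one_zsmul, add_sub_cancel]
  exact mem_orbit_self u

theorem mem_orbit_of_isCoprime (hφ : φ.IsAlt) {w : V} (hw : φ u w = 1)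
    (h : IsCoprime (φ u v) (φ w v)) : v ∈ orbit (transvectionGroup φ) u := by
  have hwu : φ w u = -1 := by rw [← hφ.neg, hw]
  refine Int.induction_on_isCoprime
    (P := fun c s => ∀ v, φ u v = c → φ w v = s → v ∈ orbit (transvectionGroup φ) u)
    (fun _ v hc _ => mem_orbit_of_apply_eq_one hφ hc) ?_ ?_ h v rfl rfl
  · intro c s a ih v hc hs
    refine mem_orbit_of_sympTransvection_mem_orbit (a := a) hφ
      (exists_apply_eq_one_of_apply_eq_one hφ hw) (map_zero _) (ih _ ?_ ?_)
    · rw [apply_sympTransvection_zero_right, hc, hs, hw, mul_one]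
    · rw [apply_sympTransvection_zero_right, hs, hφ.self_eq_zero, mul_zero, add_zero]
  · intro c s a ih v hc hs
    refine mem_orbit_of_sympTransvection_mem_orbit (a := -a) hφ ⟨w, hw⟩ (map_zero _)
      (ih _ ?_ ?_)
    · rw [apply_sympTransvection_zero_right, hc, hφ.self_eq_zero, mul_zero, add_zero]
    · rw [apply_sympTransvection_zero_right, hc, hs, hwu]
      ring

theorem exists_sympTransvection_apply_eq_one (hφ : φ.IsAlt) {w u' w' : V} (hw : φ u w = 1)
    (hw' : φ u' w' = 1) (hc : φ u u' = 0) :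
    ∃ a v₀, φ w v₀ = 0 ∧ φ u (sympTransvection φ w a v₀ u') = 1 := by
  have hwu : φ w u = -1 := by rw [← hφ.neg, hw]
  have hw'u' : φ w' u' = -1 := by rw [← hφ.neg, hw']
  refine ⟨φ u w', -w' - φ w w' • u, ?_, ?_⟩
  · simp only [map_sub, map_neg, map_zsmul, smul_eq_mul, hwu]
    ring
  · simp only [apply_sympTransvection_right, map_sub, map_neg, map_zsmul, smul_eq_mul,
      LinearMap.sub_apply, LinearMap.neg_apply, LinearMap.smul_apply, hw'u', hc, hw,
      hφ.self_eq_zero]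
    ring

theorem exists_sympTransvection_isCoprime (hφ : φ.IsAlt) {w u' w' : V} (hw : φ u w = 1)
    (hw' : φ u' w' = 1) (hc : φ u u' ≠ 0) :
    ∃ v₀, φ u v₀ = 0 ∧ IsCoprime (φ u (sympTransvection φ u 0 v₀ u'))
      (φ w (sympTransvection φ u 0 v₀ u')) := by
  have hwu : φ w u = -1 := by rw [← hφ.neg, hw]
  have hw'u' : φ w' u' = -1 := by rw [← hφ.neg, hw']
  -- `v ⊥ u`, and `f := φ v (u' + c • w)` is what `τ_{u,0,-t v}` adds `t` times to `φ w u'`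
  set v := φ u w' • w - w'
  have hv : φ u v = 0 := by
    simp only [v, map_sub, map_zsmul, smul_eq_mul, hw]
    ring
  obtain ⟨t, ht⟩ := Int.exists_isCoprime_add_mul (s := φ w u') (f := φ v u' + φ u u' * φ v w) hc
    ⟨φ w' w, -φ u w', 1, by
      simp only [v, map_sub, map_zsmul, LinearMap.sub_apply, LinearMap.smul_apply, smul_eq_mul,
        hw'u', hφ.self_eq_zero]
      rw [← hφ.neg u' w]
      ring⟩
  refine ⟨-t • v, by rw [map_zsmul, hv, smul_zero], ?_⟩
  convert ht using 1
  · simp [apply_sympTransvection_right, hv, hφ.self_eq_zero]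
  · simp only [apply_sympTransvection_right, map_zsmul, LinearMap.smul_apply, smul_eq_mul,
      hwu]
    rw [← hφ.neg w v]
    ring

theorem mem_orbit_of_unimodular (hφ : φ.IsAlt) {u' : V} (hu : ∃ w, φ u w = 1)
    (hu' : ∃ w', φ u' w' = 1) : u' ∈ orbit (transvectionGroup φ) u := by
  obtain ⟨w, hw⟩ := hu
  obtain ⟨w', hw'⟩ := hu'
  by_cases hc : φ u u' = 0
  · obtain ⟨a, v₀, hv₀, h1⟩ := exists_sympTransvection_apply_eq_one hφ hw hw' hc
    exact mem_orbit_of_sympTransvection_mem_orbit hφ (exists_apply_eq_one_of_apply_eq_one hφ hw)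
      hv₀ (mem_orbit_of_apply_eq_one hφ h1)
  · obtain ⟨v₀, hv₀, hcop⟩ := exists_sympTransvection_isCoprime hφ hw hw' hc
    exact mem_orbit_of_sympTransvection_mem_orbit hφ ⟨w, hw⟩ hv₀
      (mem_orbit_of_isCoprime hφ hw hcop)

end Transvection

theorem symplectic_transvections_transitive_general
    (V : Type*) [AddCommGroup V] [Module ℤ V]
    (φ : V →ₗ[ℤ] V →ₗ[ℤ] ℤ) (halt : ∀ x : V, φ x x = 0) :
    (∀ (u v : V) (a : ℤ), (∃ w : V, φ u w = 1) → φ u v = 0 →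
      ∃ g : V ≃ₗ[ℤ] V, (∀ x : V, g x = sympTransvection φ u a v x) ∧
        ∀ x y : V, φ (g x) (g y) = φ x y) ∧
    (∀ u u' : V, (∃ w : V, φ u w = 1) → (∃ w : V, φ u' w = 1) →
      ∃ g ∈ Subgroup.closure {g : V ≃ₗ[ℤ] V |
          ∃ (u₀ v₀ : V) (a₀ : ℤ), (∃ w : V, φ u₀ w = 1) ∧ φ u₀ v₀ = 0 ∧
            ∀ x : V, g x = sympTransvection φ u₀ a₀ v₀ x},
        g u = u') := by
  refine ⟨fun u v a _ huv => ⟨sympTransvectionEquiv halt u a v huv, fun _ => rfl,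
    apply_sympTransvection_sympTransvection halt huv⟩, fun u u' hu hu' => ?_⟩
  obtain ⟨⟨g, hg⟩, rfl⟩ := mem_orbit_of_unimodular halt hu hu'
  exact ⟨g, hg, rfl⟩

/-- For a nonsingular alternating form on a finitely generated free `ℤ`-module of
rank `2k`: every transvection `τ_{u,a,v}` (with `u` unimodular, `φ(u,v) = 0`) is
an element of the symplectic group, and the group generated by all such
transvections acts transitively on the unimodular vectors. -/
theorem symplectic_transvections_transitive
    (V : Type*) [AddCommGroup V] [Module ℤ V] [Module.Free ℤ V] [Module.Finite ℤ V]
    (k : ℕ) (hrk : Module.finrank ℤ V = 2 * k)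
    (φ : V →ₗ[ℤ] V →ₗ[ℤ] ℤ) (halt : ∀ x : V, φ x x = 0)
    (hns : Function.Bijective φ) :
    (∀ (u v : V) (a : ℤ), (∃ w : V, φ u w = 1) → φ u v = 0 →
      ∃ g : V ≃ₗ[ℤ] V, (∀ x : V, g x = sympTransvection φ u a v x) ∧
        ∀ x y : V, φ (g x) (g y) = φ x y) ∧
    (∀ u u' : V, (∃ w : V, φ u w = 1) → (∃ w : V, φ u' w = 1) →
      ∃ g ∈ Subgroup.closure {g : V ≃ₗ[ℤ] V |
          ∃ (u₀ v₀ : V) (a₀ : ℤ), (∃ w : V, φ u₀ w = 1) ∧ φ u₀ v₀ = 0 ∧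
            ∀ x : V, g x = sympTransvection φ u₀ a₀ v₀ x},
        g u = u') :=
  symplectic_transvections_transitive_general V φ halt
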